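/- arXiv:2305.12303 — 6 statements merged into one kernel-verified Lean document; each statement's English description precedes it below -/
import Mathlib

section
/- For any choice of n functions v_1, …, v_n ∈ X there exists a nonzero f ∈ X such that for every choice of coefficients c_1, …, c_n ∈ ℝ one has ‖S f − Σ_{i=1}^n c_i S v_i‖_Y ≥ λ_{n+1} ‖f‖_X; in particular no n-dimensional choice of basis can beat the (n+1)-st singular value in the Kolmogorov n-width sense. -/
/-!
Choose `f` in the span of the first `n + 1` right singular vectors with `S f` orthogonal to
every `S (w j)`: the `n` orthogonality conditions on `n + 1` coefficients have a nonzero solution.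
Then `‖S f - g‖ ≥ ‖S f‖` for every `g` in the span of the `S (w j)`, while on the span of those
singular vectors `S` stretches every vector by at least `λ_{n+1}`, since the `λ_i` decrease.
-/

open RealInnerProductSpace

theorem exists_ne_zero_forall_inner_sum_smul_eq_zero {E : Type*} [NormedAddCommGroup E]
    [InnerProductSpace ℝ E] {ι κ : Type*} [Fintype ι] [Fintype κ]
    (h : Fintype.card ι < Fintype.card κ) (x : κ → E) (y : ι → E) :
    ∃ a : κ → ℝ, a ≠ 0 ∧ ∀ j, ⟪∑ i, a i • x i, y j⟫ = 0 := by
  let M : (κ → ℝ) →ₗ[ℝ] ι → ℝ :=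
    LinearMap.pi fun j => (innerₛₗ ℝ (y j)).comp (Fintype.linearCombination ℝ x)
  have hker : LinearMap.ker M ≠ ⊥ := LinearMap.ker_ne_bot_of_finrank_lt (by simpa using h)
  obtain ⟨a, haM, ha⟩ := (Submodule.ne_bot_iff _).mp hker
  refine ⟨a, ha, fun j => ?_⟩
  rw [real_inner_comm]
  simpa [M, Fintype.linearCombination_apply] using congrFun haM j

theorem Orthonormal.norm_sum_smul_sq {E : Type*} [NormedAddCommGroup E] [InnerProductSpace ℝ E]
    {ι : Type*} {e : ι → E} (he : Orthonormal ℝ e) (s : Finset ι) (a : ι → ℝ) :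
    ‖∑ i ∈ s, a i • e i‖ ^ 2 = ∑ i ∈ s, a i ^ 2 := by
  rw [← real_inner_self_eq_norm_sq, he.inner_sum]
  simp only [conj_trivial, sq]

theorem mul_norm_sum_smul_le_norm_sum_mul_smul {X Y : Type*} [NormedAddCommGroup X]
    [InnerProductSpace ℝ X] [NormedAddCommGroup Y] [InnerProductSpace ℝ Y] {ι : Type*}
    {e : ι → X} {u : ι → Y} (he : Orthonormal ℝ e) (hu : Orthonormal ℝ u)
    {s : Finset ι} {σ : ι → ℝ} {l : ℝ} (hl : ∀ i ∈ s, l ≤ σ i) (a : ι → ℝ) :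
    l * ‖∑ i ∈ s, a i • e i‖ ≤ ‖∑ i ∈ s, (a i * σ i) • u i‖ := by
  rcases le_or_gt l 0 with hl0 | hl0
  · exact (mul_nonpos_of_nonpos_of_nonneg hl0 (norm_nonneg _)).trans (norm_nonneg _)
  refine le_of_pow_le_pow_left₀ two_ne_zero (norm_nonneg _) ?_
  rw [mul_pow, he.norm_sum_smul_sq, hu.norm_sum_smul_sq, Finset.mul_sum]
  refine Finset.sum_le_sum fun i hi => ?_
  have : l ^ 2 ≤ σ i ^ 2 := pow_le_pow_left₀ hl0.le (hl i hi) 2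
  nlinarith [sq_nonneg (a i)]

theorem norm_le_norm_sub_of_inner_eq_zero {E : Type*} [NormedAddCommGroup E]
    [InnerProductSpace ℝ E] {x y : E} (h : ⟪x, y⟫ = 0) : ‖x‖ ≤ ‖x - y‖ := by
  refine le_of_pow_le_pow_left₀ two_ne_zero (norm_nonneg _) ?_
  rw [sq, sq, norm_sub_sq_eq_norm_sq_add_norm_sq_real h]
  exact le_add_of_nonneg_right (mul_self_nonneg _)

-- Indices start at `0`, so the paper's `λ_{n+1}` is `lam n`.
theorem no_basis_beats_nwidth_general
    {X Y : Type*} [NormedAddCommGroup X] [InnerProductSpace ℝ X]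
    [NormedAddCommGroup Y] [InnerProductSpace ℝ Y]
    (S : X →L[ℝ] Y)
    (v : HilbertBasis ℕ ℝ X) (u : ℕ → Y) (hu : Orthonormal ℝ u)
    (lam : ℕ → ℝ) (hanti : StrictAnti lam)
    (hSv : ∀ i, S (v i) = lam i • u i)
    (n : ℕ) (w : Fin n → X) :
    ∃ f : X, f ≠ 0 ∧ ∀ c : Fin n → ℝ,
      lam n * ‖f‖ ≤ ‖S f - ∑ i : Fin n, c i • S (w i)‖ := by
  obtain ⟨a, ha, horth⟩ := exists_ne_zero_forall_inner_sum_smul_eq_zero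
    (by simp : Fintype.card (Fin n) < Fintype.card (Fin (n + 1)))
    (fun i : Fin (n + 1) => S (v i)) (fun j => S (w j))
  have hv : Orthonormal ℝ fun i : Fin (n + 1) => v i := v.orthonormal.comp _ Fin.val_injective
  refine ⟨∑ i, a i • v i,
    fun h0 => ha (funext (Fintype.linearIndependent_iff.mp hv.linearIndependent a h0)),
    fun c => ?_⟩
  have hSf : S (∑ i, a i • v i) = ∑ i, (a i * lam i) • u i := by
    simp only [map_sum, map_smul, hSv, smul_smul]
  calc lam n * ‖∑ i, a i • v i‖ ≤ ‖S (∑ i, a i • v i)‖ :=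
        hSf ▸ mul_norm_sum_smul_le_norm_sum_mul_smul hv (hu.comp _ Fin.val_injective)
          (fun i _ => hanti.antitone (Nat.lt_succ_iff.mp i.isLt)) a
    _ ≤ ‖S (∑ i, a i • v i) - ∑ j, c j • S (w j)‖ := by
        refine norm_le_norm_sub_of_inner_eq_zero ?_
        simp only [inner_sum, real_inner_smul_right, map_sum, map_smul, horth, mul_zero,
          Finset.sum_const_zero]

/-- For any choice of `n` functions `v_1, …, v_n ∈ X` there exists a nonzero
`f ∈ X` such that for every choice of coefficients `c_1, …, c_n ∈ ℝ`,
`‖S f − Σ_{i=1}^n c_i S v_i‖ ≥ λ_{n+1} ‖f‖`.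
(Indices shifted: `i = 1, 2, …` corresponds to `0, 1, …`, so `λ_{n+1}` is `lam n`.) -/
theorem no_basis_beats_nwidth
    {X Y : Type*} [NormedAddCommGroup X] [InnerProductSpace ℝ X] [CompleteSpace X]
    [NormedAddCommGroup Y] [InnerProductSpace ℝ Y] [CompleteSpace Y]
    (S : X →L[ℝ] Y) (hS : Function.Injective S)
    (v : HilbertBasis ℕ ℝ X) (u : ℕ → Y) (hu : Orthonormal ℝ u)
    (lam : ℕ → ℝ) (hpos : ∀ i, 0 < lam i) (hanti : StrictAnti lam)
    (hSv : ∀ i, S (v i) = lam i • u i)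
    (hSadj : ∀ i, (ContinuousLinearMap.adjoint S) (u i) = lam i • v i)
    (n : ℕ) (hn : 1 ≤ n) (w : Fin n → X) :
    ∃ f : X, f ≠ 0 ∧ ∀ c : Fin n → ℝ,
      lam n * ‖f‖ ≤ ‖S f - ∑ i : Fin n, c i • S (w i)‖ :=
  no_basis_beats_nwidth_general S v u hu lam hanti hSv n w
end

section
/- For every real N×n matrix M of rank n one has Tr(Kᵀ Θ^{-1} K) ≤ Σ_{i=1}^n λ̂_i², and the choice M = Û_n attains this maximum; hence Û_n maximizes Tr(Kᵀ Θ^{-1} K) (equivalently, minimizes Tr(C − Kᵀ Θ^{-1} K)) over all rank-n observation matrices. -/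
open Matrix

-- helper 2: full-rank square real matrix has unit det
lemma isUnit_det_of_rank_eq {k : ℕ} (A : Matrix (Fin k) (Fin k) ℝ) (h : A.rank = k) :
    IsUnit A.det := by
  rw [isUnit_iff_ne_zero]
  intro hdet
  obtain ⟨v, hv, hAv⟩ := (Matrix.exists_mulVec_eq_zero_iff).mpr hdet
  have h2 := LinearMap.finrank_range_add_finrank_ker A.mulVecLin
  have h3 : Module.finrank ℝ (Fin k → ℝ) = k := by simp
  have h1 : Module.finrank ℝ (LinearMap.range A.mulVecLin) = k := h
  have h4 : Module.finrank ℝ (LinearMap.ker A.mulVecLin) = 0 := by omega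
  have h5 : LinearMap.ker A.mulVecLin = ⊥ := Submodule.finrank_eq_zero.mp h4
  have hker : v ∈ LinearMap.ker A.mulVecLin := by
    simpa [Matrix.mulVecLin_apply] using hAv
  rw [h5] at hker
  simp only [Submodule.mem_bot] at hker
  exact hv hker

-- helper 3
lemma proj_diag {k : ℕ} (P : Matrix (Fin k) (Fin k) ℝ) (hsym : Pᵀ = P)
    (hidem : P * P = P) (i : Fin k) : 0 ≤ P i i ∧ P i i ≤ 1 := by
  have h : P i i = ∑ j, P i j ^ 2 := by
    conv_lhs => rw [← hidem]
    rw [Matrix.mul_apply]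
    refine Finset.sum_congr rfl fun j _ => ?_
    have hji : P j i = P i j := by
      conv_lhs => rw [← hsym]
      rfl
    rw [hji]; ring
  have h0 : 0 ≤ P i i := by rw [h]; positivity
  have h2 : P i i ^ 2 ≤ P i i := by
    conv_rhs => rw [h]
    exact Finset.single_le_sum (f := fun j => P i j ^ 2) (fun j _ => sq_nonneg _)
      (Finset.mem_univ i)
  exact ⟨h0, by nlinarith⟩
open Matrix

lemma filter_eq_map {N n : ℕ} (hnN : n ≤ N) :
    Finset.univ.filter (fun i : Fin N => (i : ℕ) < n) =
      Finset.univ.map ⟨Fin.castLE hnN, Fin.castLE_injective hnN⟩ := by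
  ext i
  simp only [Finset.mem_filter, Finset.mem_univ, true_and, Finset.mem_map,
    Function.Embedding.coeFn_mk]
  constructor
  · intro hi
    exact ⟨⟨(i : ℕ), hi⟩, by ext; simp⟩
  · rintro ⟨j, rfl⟩
    simp [j.2]

lemma card_filter_lt {N n : ℕ} (hnN : n ≤ N) :
    (Finset.univ.filter (fun i : Fin N => (i : ℕ) < n)).card = n := by
  rw [filter_eq_map hnN, Finset.card_map, Finset.card_univ, Fintype.card_fin]

lemma helper_sum {N n : ℕ} (hn : 1 ≤ n) (hnN : n ≤ N) (lam : Fin N → ℝ)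
    (hanti : StrictAnti lam) (hpos : ∀ i, 0 < lam i) (p : Fin N → ℝ)
    (hp0 : ∀ i, 0 ≤ p i) (hp1 : ∀ i, p i ≤ 1) (hsum : ∑ i, p i = (n : ℝ)) :
    ∑ i, lam i ^ 2 * p i ≤ ∑ i ∈ Finset.univ.filter (fun i : Fin N => (i : ℕ) < n), lam i ^ 2 := by
  have hm : n - 1 < N := by omega
  set m : Fin N := ⟨n - 1, hm⟩ with hmdef
  have hc : ∀ i : Fin N, (i : ℕ) < n → lam m ^ 2 ≤ lam i ^ 2 := by
    intro i hi
    have h1 : lam m ≤ lam i := hanti.antitone (by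
      rw [Fin.le_def]; simp only [hmdef]; omega)
    have := (hpos i).le
    nlinarith [hpos m]
  have hc' : ∀ i : Fin N, ¬((i : ℕ) < n) → lam i ^ 2 ≤ lam m ^ 2 := by
    intro i hi
    have h1 : lam i ≤ lam m := hanti.antitone (by
      rw [Fin.le_def]; simp only [hmdef]; omega)
    nlinarith [hpos i]
  have key : ∀ i : Fin N, lam i ^ 2 * p i ≤
      (if (i : ℕ) < n then lam i ^ 2 else 0) + lam m ^ 2 * (p i - if (i : ℕ) < n then 1 else 0) := by
    intro i
    by_cases hi : (i : ℕ) < n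
    · simp only [if_pos hi]
      nlinarith [hc i hi, hp1 i, hp0 i]
    · simp only [if_neg hi]
      nlinarith [hc' i hi, hp0 i]
  have hsum2 : ∑ i : Fin N, (if (i : ℕ) < n then (1 : ℝ) else 0) = (n : ℝ) := by
    rw [Finset.sum_boole, card_filter_lt hnN]
  have hmain := Finset.sum_le_sum (fun i (_ : i ∈ Finset.univ) => key i)
  rw [Finset.sum_add_distrib] at hmain
  rw [← Finset.sum_filter] at hmain
  have hexp : ∑ i : Fin N, lam m ^ 2 * (p i - if (i : ℕ) < n then 1 else 0) = 0 := by
    rw [← Finset.mul_sum, Finset.sum_sub_distrib, hsum, hsum2]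
    ring
  rw [hexp, add_zero] at hmain
  exact hmain
open Matrix

lemma aux_idem {N n : ℕ} (D : Matrix (Fin N) (Fin N) ℝ) (W : Matrix (Fin N) (Fin n) ℝ)
    (Y : Matrix (Fin n) (Fin n) ℝ) (hY : Y * (Wᵀ * (D * D) * W) * Y = Y) :
    (D * W * Y * (Wᵀ * D)) * (D * W * Y * (Wᵀ * D)) = D * W * Y * (Wᵀ * D) := by
  calc (D * W * Y * (Wᵀ * D)) * (D * W * Y * (Wᵀ * D))
      = D * W * (Y * (Wᵀ * (D * D) * W) * Y) * (Wᵀ * D) := by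
        simp only [Matrix.mul_assoc]
    _ = D * W * Y * (Wᵀ * D) := by rw [hY]

lemma aux_sym {N n : ℕ} (D : Matrix (Fin N) (Fin N) ℝ) (W : Matrix (Fin N) (Fin n) ℝ)
    (Y : Matrix (Fin n) (Fin n) ℝ) (hD : Dᵀ = D) (hY : Yᵀ = Y) :
    (D * W * Y * (Wᵀ * D))ᵀ = D * W * Y * (Wᵀ * D) := by
  simp only [Matrix.transpose_mul, Matrix.transpose_transpose, hD, hY, Matrix.mul_assoc]

lemma proj_facts {N n : ℕ} (lam : Fin N → ℝ) (W : Matrix (Fin N) (Fin n) ℝ)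
    (hdet : IsUnit (Wᵀ * (Matrix.diagonal lam * Matrix.diagonal lam) * W).det) :
    ∃ p : Fin N → ℝ, (∀ i, 0 ≤ p i) ∧ (∀ i, p i ≤ 1) ∧ (∑ i, p i = (n : ℝ)) ∧
      Matrix.trace ((Matrix.diagonal lam * Matrix.diagonal lam) * W *
          (Wᵀ * (Matrix.diagonal lam * Matrix.diagonal lam) * W)⁻¹ *
          (Wᵀ * (Matrix.diagonal lam * Matrix.diagonal lam))) = ∑ i, lam i ^ 2 * p i := by
  have hDsym : (Matrix.diagonal lam)ᵀ = Matrix.diagonal lam := Matrix.diagonal_transpose lam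
  have hΘsym : (Wᵀ * (Matrix.diagonal lam * Matrix.diagonal lam) * W)ᵀ
      = Wᵀ * (Matrix.diagonal lam * Matrix.diagonal lam) * W := by
    simp only [Matrix.transpose_mul, Matrix.transpose_transpose, hDsym, Matrix.mul_assoc]
  have hinv : (Wᵀ * (Matrix.diagonal lam * Matrix.diagonal lam) * W)⁻¹ *
      (Wᵀ * (Matrix.diagonal lam * Matrix.diagonal lam) * W) = 1 := nonsing_inv_mul _ hdet
  have hinv' : (Wᵀ * (Matrix.diagonal lam * Matrix.diagonal lam) * W) *
      (Wᵀ * (Matrix.diagonal lam * Matrix.diagonal lam) * W)⁻¹ = 1 := mul_nonsing_inv _ hdet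
  have hYsym : ((Wᵀ * (Matrix.diagonal lam * Matrix.diagonal lam) * W)⁻¹)ᵀ
      = (Wᵀ * (Matrix.diagonal lam * Matrix.diagonal lam) * W)⁻¹ := by
    rw [Matrix.transpose_nonsing_inv, hΘsym]
  have hY : (Wᵀ * (Matrix.diagonal lam * Matrix.diagonal lam) * W)⁻¹ *
      (Wᵀ * (Matrix.diagonal lam * Matrix.diagonal lam) * W) *
      (Wᵀ * (Matrix.diagonal lam * Matrix.diagonal lam) * W)⁻¹
      = (Wᵀ * (Matrix.diagonal lam * Matrix.diagonal lam) * W)⁻¹ := by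
    rw [hinv, one_mul]
  set D := Matrix.diagonal lam with hD
  set Y := (Wᵀ * (D * D) * W)⁻¹ with hYdef
  set P := D * W * Y * (Wᵀ * D) with hP
  have hPsym : Pᵀ = P := aux_sym D W Y hDsym hYsym
  have hPP : P * P = P := aux_idem D W Y hY
  have hPtr : Matrix.trace P = (n : ℝ) := by
    rw [hP, Matrix.trace_mul_comm]
    have : Wᵀ * D * (D * W * Y) = (Wᵀ * (D * D) * W) * Y := by
      simp only [Matrix.mul_assoc]
    rw [this, hinv', Matrix.trace_one]
    simp
  refine ⟨fun i => P i i, fun i => (proj_diag P hPsym hPP i).1,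
    fun i => (proj_diag P hPsym hPP i).2, ?_, ?_⟩
  · have : ∑ i, P i i = Matrix.trace P := rfl
    rw [this, hPtr]
  · have h1 : (D * D) * W * Y * (Wᵀ * (D * D)) = D * P * D := by
      rw [hP]; simp only [Matrix.mul_assoc]
    rw [h1, Matrix.trace_mul_cycle]
    rw [show D * D = Matrix.diagonal (fun i => lam i * lam i) from by
      rw [hD, Matrix.diagonal_mul_diagonal]]
    rw [Matrix.trace]
    simp only [Matrix.diag_apply, Matrix.diagonal_mul]
    exact Finset.sum_congr rfl fun i _ => by ring


/-- For every real `N×n` matrix `M` of rank `n`,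
`Tr(Kᵀ Θ⁻¹ K) ≤ Σ_{i=1}^n λ̂_i²`, and the choice `M = Û_n` (first `n` columns of `Û`)
attains this maximum. Here `G = Û Λ̂ V̂ᵀ`, `C = G Gᵀ`, `K = Mᵀ C`, `Θ = Mᵀ C M`. -/
theorem optimal_observation_maximum
    (N n : ℕ) (hn : 1 ≤ n) (hnN : n ≤ N)
    (U V : Matrix (Fin N) (Fin N) ℝ) (hU : Uᵀ * U = 1) (hV : Vᵀ * V = 1)
    (lam : Fin N → ℝ) (hanti : StrictAnti lam) (hpos : ∀ i, 0 < lam i)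
    (L G C : Matrix (Fin N) (Fin N) ℝ)
    (hL : L = Matrix.diagonal lam) (hGdef : G = U * L * Vᵀ) (hC : C = G * Gᵀ)
    (Un : Matrix (Fin N) (Fin n) ℝ) (hUn : Un = U.submatrix id (Fin.castLE hnN)) :
    (∀ M : Matrix (Fin N) (Fin n) ℝ, M.rank = n →
        Matrix.trace ((Mᵀ * C)ᵀ * (Mᵀ * C * M)⁻¹ * (Mᵀ * C)) ≤
          ∑ i ∈ Finset.univ.filter (fun i : Fin N => (i : ℕ) < n), lam i ^ 2)
      ∧ Matrix.trace ((Unᵀ * C)ᵀ * (Unᵀ * C * Un)⁻¹ * (Unᵀ * C)) =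
          ∑ i ∈ Finset.univ.filter (fun i : Fin N => (i : ℕ) < n), lam i ^ 2 := by
  have hUU : U * Uᵀ = 1 := mul_eq_one_comm.mp hU
  have hCU : C = U * (Matrix.diagonal lam * Matrix.diagonal lam) * Uᵀ := by
    rw [hC, hGdef, hL]
    simp only [Matrix.transpose_mul, Matrix.transpose_transpose, Matrix.diagonal_transpose,
      Matrix.mul_assoc]
    rw [show Vᵀ * (V * (Matrix.diagonal lam * Uᵀ)) = Matrix.diagonal lam * Uᵀ from by
      rw [← Matrix.mul_assoc, hV, one_mul]]
  have hdetD : IsUnit (Matrix.diagonal lam).det := by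
    rw [Matrix.det_diagonal, isUnit_iff_ne_zero]
    exact Finset.prod_ne_zero_iff.mpr fun i _ => (hpos i).ne'
  have hdetU : IsUnit (Uᵀ).det := IsUnit.of_mul_eq_one U.det (by rw [← Matrix.det_mul, hU, Matrix.det_one])
  constructor
  · intro M hM
    -- determinant of Θ' is a unit
    have hr1 : ((Matrix.diagonal lam * Uᵀ) * M).rank = n := by
      rw [Matrix.rank_mul_eq_right_of_isUnit_det _ _ (by rw [Matrix.det_mul]; exact hdetD.mul hdetU), hM]
    have hr2 : (((Matrix.diagonal lam * Uᵀ) * M)ᵀ * ((Matrix.diagonal lam * Uᵀ) * M)).rank = n := by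
      rw [Matrix.rank_transpose_mul_self, hr1]
    have heq : ((Matrix.diagonal lam * Uᵀ) * M)ᵀ * ((Matrix.diagonal lam * Uᵀ) * M)
        = (Uᵀ * M)ᵀ * (Matrix.diagonal lam * Matrix.diagonal lam) * (Uᵀ * M) := by
      simp only [Matrix.transpose_mul, Matrix.transpose_transpose, Matrix.diagonal_transpose,
        Matrix.mul_assoc]
    have hdet : IsUnit ((Uᵀ * M)ᵀ * (Matrix.diagonal lam * Matrix.diagonal lam) * (Uᵀ * M)).det :=
      isUnit_det_of_rank_eq _ (heq ▸ hr2)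
    obtain ⟨p, hp0, hp1, hsum, htr⟩ := proj_facts lam (Uᵀ * M) hdet
    have hΘeq : Mᵀ * C * M = (Uᵀ * M)ᵀ * (Matrix.diagonal lam * Matrix.diagonal lam) * (Uᵀ * M) := by
      rw [hCU]
      simp only [Matrix.transpose_mul, Matrix.transpose_transpose, Matrix.mul_assoc]
    have hbig : (Mᵀ * C)ᵀ * (Mᵀ * C * M)⁻¹ * (Mᵀ * C)
        = U * ((Matrix.diagonal lam * Matrix.diagonal lam) * (Uᵀ * M) *
            ((Uᵀ * M)ᵀ * (Matrix.diagonal lam * Matrix.diagonal lam) * (Uᵀ * M))⁻¹ *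
            ((Uᵀ * M)ᵀ * (Matrix.diagonal lam * Matrix.diagonal lam))) * Uᵀ := by
      rw [hΘeq, hCU]
      simp only [Matrix.transpose_mul, Matrix.transpose_transpose, Matrix.diagonal_transpose,
        Matrix.mul_assoc]
    rw [hbig, Matrix.trace_mul_cycle, ← Matrix.mul_assoc, hU, Matrix.one_mul, htr]
    exact helper_sum hn hnN lam hanti hpos p hp0 hp1 hsum
  · -- equality case
    have hUnU : Uᵀ * Un = (1 : Matrix (Fin N) (Fin N) ℝ).submatrix id (Fin.castLE hnN) := by
      rw [hUn]
      have h1 : Uᵀ * U.submatrix id (Fin.castLE hnN)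
          = (Uᵀ * U).submatrix id (Fin.castLE hnN) := by
        ext i j; simp [Matrix.mul_apply, Matrix.submatrix_apply]
      rw [h1, hU]
    have hUnT : Unᵀ * U = ((1 : Matrix (Fin N) (Fin N) ℝ).submatrix id (Fin.castLE hnN))ᵀ := by
      have h2 := congrArg Matrix.transpose hUnU
      simpa [Matrix.transpose_mul] using h2
    have hE : ∀ X : Matrix (Fin N) (Fin N) ℝ,
        ((1 : Matrix (Fin N) (Fin N) ℝ).submatrix id (Fin.castLE hnN))ᵀ * X *
          ((1 : Matrix (Fin N) (Fin N) ℝ).submatrix id (Fin.castLE hnN))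
        = X.submatrix (Fin.castLE hnN) (Fin.castLE hnN) := by
      intro X
      ext j k
      simp [Matrix.mul_apply, Matrix.submatrix_apply, Matrix.one_apply, Finset.sum_ite_eq,
        Finset.sum_ite_eq', ite_mul, mul_ite]
    have hΘn : Unᵀ * C * Un
        = Matrix.diagonal (fun j : Fin n => lam (Fin.castLE hnN j) * lam (Fin.castLE hnN j)) := by
      rw [hCU]
      calc Unᵀ * (U * (Matrix.diagonal lam * Matrix.diagonal lam) * Uᵀ) * Un
          = (Unᵀ * U) * (Matrix.diagonal lam * Matrix.diagonal lam) * (Uᵀ * Un) := by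
            simp only [Matrix.mul_assoc]
        _ = ((1 : Matrix (Fin N) (Fin N) ℝ).submatrix id (Fin.castLE hnN))ᵀ *
              (Matrix.diagonal lam * Matrix.diagonal lam) *
              ((1 : Matrix (Fin N) (Fin N) ℝ).submatrix id (Fin.castLE hnN)) := by
            rw [hUnU, hUnT]
        _ = (Matrix.diagonal lam * Matrix.diagonal lam).submatrix (Fin.castLE hnN) (Fin.castLE hnN) := hE _
        _ = Matrix.diagonal (fun j : Fin n => lam (Fin.castLE hnN j) * lam (Fin.castLE hnN j)) := by
            rw [Matrix.diagonal_mul_diagonal,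
              Matrix.submatrix_diagonal _ _ (Fin.castLE_injective hnN)]
            rfl
    have hwne : ∀ j : Fin n, lam (Fin.castLE hnN j) * lam (Fin.castLE hnN j) ≠ 0 :=
      fun j => (mul_pos (hpos _) (hpos _)).ne'
    have hwinv : (Matrix.diagonal (fun j : Fin n => lam (Fin.castLE hnN j) * lam (Fin.castLE hnN j)))⁻¹
        = Matrix.diagonal (fun j : Fin n => (lam (Fin.castLE hnN j) * lam (Fin.castLE hnN j))⁻¹) := by
      refine Matrix.inv_eq_left_inv ?_
      rw [Matrix.diagonal_mul_diagonal]
      rw [show (fun j : Fin n => (lam (Fin.castLE hnN j) * lam (Fin.castLE hnN j))⁻¹ *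
          (lam (Fin.castLE hnN j) * lam (Fin.castLE hnN j))) = fun _ => (1 : ℝ) from
        funext fun j => inv_mul_cancel₀ (hwne j)]
      exact Matrix.diagonal_one
    have hKn : Unᵀ * C = ((1 : Matrix (Fin N) (Fin N) ℝ).submatrix id (Fin.castLE hnN))ᵀ *
        (Matrix.diagonal lam * Matrix.diagonal lam) * Uᵀ := by
      rw [hCU]
      calc Unᵀ * (U * (Matrix.diagonal lam * Matrix.diagonal lam) * Uᵀ)
          = (Unᵀ * U) * ((Matrix.diagonal lam * Matrix.diagonal lam) * Uᵀ) := by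
            simp only [Matrix.mul_assoc]
        _ = _ := by rw [hUnT]; simp only [Matrix.mul_assoc]
    have hbig2 : (Unᵀ * C)ᵀ * (Unᵀ * C * Un)⁻¹ * (Unᵀ * C)
        = U * ((Matrix.diagonal lam * Matrix.diagonal lam) *
            ((1 : Matrix (Fin N) (Fin N) ℝ).submatrix id (Fin.castLE hnN)) *
            (Matrix.diagonal (fun j : Fin n => (lam (Fin.castLE hnN j) * lam (Fin.castLE hnN j))⁻¹)) *
            (((1 : Matrix (Fin N) (Fin N) ℝ).submatrix id (Fin.castLE hnN))ᵀ *
              (Matrix.diagonal lam * Matrix.diagonal lam))) * Uᵀ := by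
      rw [hΘn, hwinv, hKn]
      simp only [Matrix.transpose_mul, Matrix.transpose_transpose, Matrix.diagonal_transpose,
        Matrix.mul_assoc]
    rw [hbig2, Matrix.trace_mul_cycle, ← Matrix.mul_assoc, hU, Matrix.one_mul,
      Matrix.trace_mul_cycle]
    have hmid : ((1 : Matrix (Fin N) (Fin N) ℝ).submatrix id (Fin.castLE hnN))ᵀ *
          (Matrix.diagonal lam * Matrix.diagonal lam) *
          ((Matrix.diagonal lam * Matrix.diagonal lam) *
            ((1 : Matrix (Fin N) (Fin N) ℝ).submatrix id (Fin.castLE hnN)))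
        = ((1 : Matrix (Fin N) (Fin N) ℝ).submatrix id (Fin.castLE hnN))ᵀ *
            ((Matrix.diagonal lam * Matrix.diagonal lam) * (Matrix.diagonal lam * Matrix.diagonal lam)) *
            ((1 : Matrix (Fin N) (Fin N) ℝ).submatrix id (Fin.castLE hnN)) := by
      simp only [Matrix.mul_assoc]
    rw [hmid, hE]
    rw [show (Matrix.diagonal lam * Matrix.diagonal lam) * (Matrix.diagonal lam * Matrix.diagonal lam)
        = Matrix.diagonal (fun i => lam i * lam i * (lam i * lam i)) from by
      rw [Matrix.diagonal_mul_diagonal, Matrix.diagonal_mul_diagonal]]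
    rw [Matrix.submatrix_diagonal _ _ (Fin.castLE_injective hnN), Matrix.diagonal_mul_diagonal,
      Matrix.trace_diagonal]
    rw [filter_eq_map hnN, Finset.sum_map]
    refine Finset.sum_congr rfl fun j _ => ?_
    simp only [Function.comp_apply, Function.Embedding.coeFn_mk]
    field_simp
end

section
/- For the optimal observation matrix M = Û_n, the posterior covariance trace equals the tail sum of squared singular values: Tr(Σ) = Tr(C − Kᵀ Θ^{-1} K) = Σ_{j=n+1}^N λ̂_j². -/
open Matrix

/-- For the optimal observation matrix `M = Û_n`, the posterior covariance
trace equals the tail sum of squared singular values: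
`Tr(Σ) = Tr(C − Kᵀ Θ⁻¹ K) = Σ_{j=n+1}^N λ̂_j²`.
Here `G = Û Λ̂ V̂ᵀ`, `C = G Gᵀ`, `K = Mᵀ C`, `Θ = Mᵀ C M`, `Σ = C − Kᵀ Θ⁻¹ K`. -/
theorem optimal_observation_trace
    (N n : ℕ) (hn : 1 ≤ n) (hnN : n ≤ N)
    (U V : Matrix (Fin N) (Fin N) ℝ) (hU : Uᵀ * U = 1) (hV : Vᵀ * V = 1)
    (lam : Fin N → ℝ) (hanti : StrictAnti lam) (hpos : ∀ i, 0 < lam i)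
    (L G C : Matrix (Fin N) (Fin N) ℝ)
    (hL : L = Matrix.diagonal lam) (hGdef : G = U * L * Vᵀ) (hC : C = G * Gᵀ)
    (Un : Matrix (Fin N) (Fin n) ℝ) (hUn : Un = U.submatrix id (Fin.castLE hnN))
    (K : Matrix (Fin n) (Fin N) ℝ) (hK : K = Unᵀ * C)
    (Θ : Matrix (Fin n) (Fin n) ℝ) (hΘ : Θ = Unᵀ * C * Un)
    (Sig : Matrix (Fin N) (Fin N) ℝ) (hSig : Sig = C - Kᵀ * Θ⁻¹ * K) :
    Matrix.trace Sig = ∑ j ∈ Finset.univ.filter (fun j : Fin N => n ≤ (j : ℕ)), lam j ^ 2 := by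
  set c : Fin n → Fin N := Fin.castLE hnN with hc
  have hcinj : Function.Injective c := Fin.castLE_injective hnN
  set D2 : Matrix (Fin N) (Fin N) ℝ := Matrix.diagonal (fun j => lam j ^ 2) with hD2
  -- C = U * D2 * Uᵀ
  have hC2 : C = U * D2 * Uᵀ := by
    rw [hC, hGdef, hL]
    rw [transpose_mul, transpose_mul, transpose_transpose, diagonal_transpose]
    simp only [Matrix.mul_assoc]
    rw [← Matrix.mul_assoc Vᵀ V, hV, Matrix.one_mul,
      ← Matrix.mul_assoc (Matrix.diagonal lam), diagonal_mul_diagonal]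
    congr 2
    ext j
    rw [hD2]; simp [sq]
  -- products with the identity submatrix
  have hE1 : Unᵀ * U = (1 : Matrix (Fin N) (Fin N) ℝ).submatrix c id := by
    have h := Matrix.submatrix_mul Uᵀ U c id id Function.bijective_id
    rw [hUn, transpose_submatrix, ← hU]
    simpa using h.symm
  have hE2 : Uᵀ * Un = (1 : Matrix (Fin N) (Fin N) ℝ).submatrix id c := by
    have h := Matrix.submatrix_mul Uᵀ U id id c Function.bijective_id
    rw [hUn, ← hU]
    simpa using h.symm
  have h1D : (1 : Matrix (Fin N) (Fin N) ℝ).submatrix c id * D2 = D2.submatrix c id := by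
    have h := Matrix.submatrix_mul (1 : Matrix (Fin N) (Fin N) ℝ) D2 c id id
      Function.bijective_id
    simpa using h.symm
  have hD1 : D2 * (1 : Matrix (Fin N) (Fin N) ℝ).submatrix id c = D2.submatrix id c := by
    have h := Matrix.submatrix_mul D2 (1 : Matrix (Fin N) (Fin N) ℝ) id id c
      Function.bijective_id
    simpa using h.symm
  -- K = D2.submatrix c id * Uᵀ
  have hK2 : K = D2.submatrix c id * Uᵀ := by
    rw [hK, hC2, ← Matrix.mul_assoc, ← Matrix.mul_assoc, hE1, h1D]
  -- Θ is diagonal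
  have hΘ2 : Θ = Matrix.diagonal (fun i => lam (c i) ^ 2) := by
    have h := Matrix.submatrix_mul D2 (1 : Matrix (Fin N) (Fin N) ℝ) c id c
      Function.bijective_id
    rw [hΘ, hC2, ← Matrix.mul_assoc, ← Matrix.mul_assoc, hE1, h1D, Matrix.mul_assoc,
      hE2, ← h, Matrix.mul_one, Matrix.submatrix_diagonal _ c hcinj]
    rfl
  -- K * Kᵀ is diagonal
  have hKK : K * Kᵀ = Matrix.diagonal (fun i => (lam (c i) ^ 2) ^ 2) := by
    have h := Matrix.submatrix_mul D2 D2 c id c Function.bijective_id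
    rw [hK2, transpose_mul, transpose_submatrix, transpose_transpose, diagonal_transpose,
      Matrix.mul_assoc, ← Matrix.mul_assoc Uᵀ U, hU, Matrix.one_mul, ← h,
      diagonal_mul_diagonal, Matrix.submatrix_diagonal _ c hcinj]
    exact congrArg Matrix.diagonal (funext fun i => (sq (lam (c i) ^ 2)).symm)
  have hlam : ∀ i, lam (c i) ^ 2 ≠ 0 := fun i => pow_ne_zero _ (hpos (c i)).ne'
  -- inverse of Θ
  have hΘinv : Θ⁻¹ = Matrix.diagonal (fun i => (lam (c i) ^ 2)⁻¹) := by
    refine Matrix.inv_eq_right_inv ?_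
    rw [hΘ2, diagonal_mul_diagonal, ← Matrix.diagonal_one]
    exact congrArg Matrix.diagonal (funext fun i => mul_inv_cancel₀ (hlam i))
  -- trace computations
  have ht1 : Matrix.trace C = ∑ j : Fin N, lam j ^ 2 := by
    rw [hC2, Matrix.trace_mul_comm, ← Matrix.mul_assoc, hU, Matrix.one_mul, Matrix.trace_diagonal]
  have ht2 : Matrix.trace (Kᵀ * Θ⁻¹ * K) = ∑ i : Fin n, lam (c i) ^ 2 := by
    rw [Matrix.trace_mul_comm, ← Matrix.mul_assoc, hKK, hΘinv, diagonal_mul_diagonal,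
      Matrix.trace_diagonal]
    refine Finset.sum_congr rfl fun i _ => ?_
    rw [sq ((lam (c i)) ^ 2), mul_assoc, mul_inv_cancel₀ (hlam i), mul_one]
  rw [hSig, Matrix.trace_sub, ht1, ht2]
  have hsplit := Finset.sum_filter_add_sum_filter_not Finset.univ
    (fun j : Fin N => n ≤ (j : ℕ)) (fun j => lam j ^ 2)
  have himg : Finset.univ.filter (fun j : Fin N => ¬ n ≤ (j : ℕ)) = Finset.univ.image c := by
    ext j
    simp only [Finset.mem_filter, Finset.mem_univ, true_and, Finset.mem_image, not_le]
    constructor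
    · intro hj
      exact ⟨⟨(j : ℕ), hj⟩, by simp [hc, Fin.ext_iff]⟩
    · rintro ⟨i, rfl⟩
      simp [hc]
  have hbij : ∑ i : Fin n, lam (c i) ^ 2
      = ∑ j ∈ Finset.univ.filter (fun j : Fin N => ¬ n ≤ (j : ℕ)), lam j ^ 2 := by
    rw [himg, Finset.sum_image (fun i _ j _ h => hcinj h)]
  rw [hbij]
  linarith [hsplit]
end

section
/- Setting ĉ_i = ⟨f − 𝒩(u), v̂_i⟩_X for i = 1, …, n, the n-term truncation satisfies the a priori bound ‖u − Σ_{i=1}^n λ_i ĉ_i û_i‖_Y ≤ λ_{n+1} (‖f‖_X + ‖𝒩(u)‖_X). -/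
open RealInnerProductSpace

/-- If `u` is orthonormal and `∑ b i • u i` has sum `s`, then `⟪s, u j⟫ = b j`. -/
lemma aux_inner_hasSum {Y : Type*} [NormedAddCommGroup Y] [InnerProductSpace ℝ Y]
    (u : ℕ → Y) (hu : Orthonormal ℝ u) (b : ℕ → ℝ) (s : Y)
    (h : HasSum (fun i => b i • u i) s) (j : ℕ) : ⟪u j, s⟫ = b j := by
  have h1 : HasSum (fun i => ⟪u j, b i • u i⟫) ⟪u j, s⟫ := h.mapL (innerSL ℝ (u j))
  have h2 : (fun i => ⟪u j, b i • u i⟫) = fun i => if i = j then b j else 0 := by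
    funext i
    rw [real_inner_smul_right, orthonormal_iff_ite.mp hu]
    by_cases hij : i = j
    · subst hij; simp
    · simp [hij, Ne.symm hij]
  rw [h2] at h1
  exact h1.unique (hasSum_ite_eq j (b j))

/-- If `u` is orthonormal and `∑ b i • u i` has sum `s`, then `∑ b i ^ 2 = ‖s‖ ^ 2`. -/
lemma aux_norm_sq_hasSum {Y : Type*} [NormedAddCommGroup Y] [InnerProductSpace ℝ Y]
    (u : ℕ → Y) (hu : Orthonormal ℝ u) (b : ℕ → ℝ) (s : Y)
    (h : HasSum (fun i => b i • u i) s) : HasSum (fun i => b i * b i) (‖s‖ ^ 2) := by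
  have h1 : HasSum (fun i => ⟪s, b i • u i⟫) ⟪s, s⟫ := h.mapL (innerSL ℝ s)
  have h2 : (fun i => ⟪s, b i • u i⟫) = fun i => b i * b i := by
    funext i
    rw [real_inner_smul_right, real_inner_comm, aux_inner_hasSum u hu b s h i]
  rw [h2, real_inner_self_eq_norm_sq] at h1
  exact h1

/-- For a solution `u = S(f − 𝒩(u))` of the semilinear problem, setting
`ĉ_i = ⟨f − 𝒩(u), v̂_i⟩` for `i = 1, …, n`, the `n`-term truncation satisfies
`‖u − Σ_{i=1}^n λ_i ĉ_i û_i‖ ≤ λ_{n+1} (‖f‖ + ‖𝒩(u)‖)`.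
(Indices shifted: `i = 1, 2, …` corresponds to `0, 1, …`, so `λ_{n+1}` is `lam n`.) -/
theorem semilinear_truncation_bound
    {X Y : Type*} [NormedAddCommGroup X] [InnerProductSpace ℝ X] [CompleteSpace X]
    [NormedAddCommGroup Y] [InnerProductSpace ℝ Y] [CompleteSpace Y]
    (S : X →L[ℝ] Y) (hS : Function.Injective S)
    (v : HilbertBasis ℕ ℝ X) (u : ℕ → Y) (hu : Orthonormal ℝ u)
    (lam : ℕ → ℝ) (hpos : ∀ i, 0 < lam i) (hanti : StrictAnti lam)
    (hSv : ∀ i, S (v i) = lam i • u i)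
    (hSadj : ∀ i, (ContinuousLinearMap.adjoint S) (u i) = lam i • v i)
    (n : ℕ) (hn : 1 ≤ n)
    (Nop : Y → X) (f : X) (usol : Y) (husol : usol = S (f - Nop usol)) :
    ‖usol - ∑ i ∈ Finset.range n, (lam i * ⟪f - Nop usol, v i⟫) • u i‖
      ≤ lam n * (‖f‖ + ‖Nop usol‖) := by
  set g : X := f - Nop usol with hg
  set c : ℕ → ℝ := fun i => ⟪g, v i⟫ with hc
  -- HasSum for S g
  have h1 : HasSum (fun i => (lam i * c i) • u i) (S g) := by
    have := (v.hasSum_repr g).mapL S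
    have heq : (fun i => S (v.repr g i • v i)) = fun i => (lam i * c i) • u i := by
      funext i
      rw [map_smul, hSv i, smul_smul, v.repr_apply_apply, real_inner_comm]
      ring_nf
      exact congrArg (· • u i) (mul_comm _ _)
    rwa [heq] at this
  set P : Y := ∑ i ∈ Finset.range n, (lam i * c i) • u i with hP
  have hF : HasSum (fun i => if i ∈ Finset.range n then (lam i * c i) • u i else 0) P := by
    have := hasSum_sum_of_ne_finset_zero (s := Finset.range n)
      (f := fun i => if i ∈ Finset.range n then (lam i * c i) • u i else 0)
      (L := SummationFilter.unconditional ℕ) (by intro i hi; simp [hi])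
    rwa [Finset.sum_ite_of_true (fun i hi => hi)] at this
  set b : ℕ → ℝ := fun i => if i ∈ Finset.range n then 0 else lam i * c i with hb
  have h2 : HasSum (fun i => b i • u i) (S g - P) := by
    have := h1.sub hF
    have heq : (fun i => (lam i * c i) • u i -
        (if i ∈ Finset.range n then (lam i * c i) • u i else 0)) = fun i => b i • u i := by
      funext i
      by_cases hi : i ∈ Finset.range n
      · simp only [hb]; rw [if_pos hi, if_pos hi, sub_self, zero_smul]
      · simp only [hb]; rw [if_neg hi, if_neg hi, sub_zero]
    rwa [heq] at this
  have h3 : HasSum (fun i => b i * b i) (‖S g - P‖ ^ 2) := aux_norm_sq_hasSum u hu b _ h2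
  have h4 : HasSum (fun i => (lam n * lam n) * (c i * c i)) ((lam n * lam n) * ‖g‖ ^ 2) := by
    have := v.hasSum_inner_mul_inner g g
    have heq : (fun i => ⟪g, v i⟫ * ⟪v i, g⟫) = fun i => c i * c i := by
      funext i; rw [real_inner_comm g (v i)]
    rw [heq, real_inner_self_eq_norm_sq] at this
    exact this.mul_left _
  have hle : ∀ i, b i * b i ≤ (lam n * lam n) * (c i * c i) := by
    intro i
    by_cases hi : i ∈ Finset.range n
    · simp only [hb]; rw [if_pos hi]
      simpa using mul_nonneg (mul_self_nonneg (lam n)) (mul_self_nonneg (c i))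
    · simp only [hb]; rw [if_neg hi]
      have hin : n ≤ i := Nat.le_of_not_lt (fun h => hi (Finset.mem_range.mpr h))
      have hlam : lam i ≤ lam n := hanti.antitone hin
      have h0 : (0:ℝ) ≤ lam i := (hpos i).le
      calc (lam i * c i) * (lam i * c i) = (lam i * lam i) * (c i * c i) := by ring
        _ ≤ (lam n * lam n) * (c i * c i) := by
            exact mul_le_mul_of_nonneg_right (mul_le_mul hlam hlam h0 (hpos n).le)
              (mul_self_nonneg _)
  have hsq : ‖S g - P‖ ^ 2 ≤ (lam n * ‖g‖) ^ 2 := by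
    have := hasSum_le hle h3 h4
    calc ‖S g - P‖ ^ 2 ≤ (lam n * lam n) * ‖g‖ ^ 2 := this
      _ = (lam n * ‖g‖) ^ 2 := by ring
  have hnorm : ‖S g - P‖ ≤ lam n * ‖g‖ := by
    have h0 : (0:ℝ) ≤ lam n * ‖g‖ := mul_nonneg (hpos n).le (norm_nonneg g)
    nlinarith [norm_nonneg (S g - P)]
  calc ‖usol - P‖ = ‖S g - P‖ := by rw [husol]
    _ ≤ lam n * ‖g‖ := hnorm
    _ ≤ lam n * (‖f‖ + ‖Nop usol‖) := by
        apply mul_le_mul_of_nonneg_left (norm_sub_le f (Nop usol)) (hpos n).le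
end

section
/- Let ĉ ∈ ℝⁿ be a minimizer of the map c ↦ ‖Σ_{i=1}^n c_i v̂_i − (f − 𝒩(Σ_{i=1}^n λ_i c_i û_i))‖_X over ℝⁿ, and set u_n = Σ_{i=1}^n λ_i ĉ_i û_i. Then ‖u − u_n‖_Y ≤ E((1 + C λ_{n+1}) · ‖P_n^⊥(f − 𝒩(u))‖_X). -/
open RealInnerProductSpace

set_option maxHeartbeats 1000000

/-- Let `ĉ ∈ ℝⁿ` minimize
`c ↦ ‖Σ_{i=1}^n c_i v̂_i − (f − 𝒩(Σ_{i=1}^n λ_i c_i û_i))‖` over `ℝⁿ`, and set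
`u_n = Σ_{i=1}^n λ_i ĉ_i û_i`. Then
`‖u − u_n‖ ≤ E((1 + C λ_{n+1}) ‖P_n^⊥(f − 𝒩(u))‖)`, where
`P_n^⊥ g = g − Σ_{i=1}^n ⟨g, v̂_i⟩ v̂_i`, `E` is the (nondecreasing) stability modulus and
`C` the Lipschitz constant of `𝒩`.
(Indices shifted: `i = 1, 2, …` corresponds to `0, 1, …`, so `λ_{n+1}` is `lam n`.) -/
theorem semilinear_first_choice_bound
    {X Y : Type*} [NormedAddCommGroup X] [InnerProductSpace ℝ X] [CompleteSpace X]
    [NormedAddCommGroup Y] [InnerProductSpace ℝ Y] [CompleteSpace Y]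
    (S : X →L[ℝ] Y) (hS : Function.Injective S)
    (v : HilbertBasis ℕ ℝ X) (u : ℕ → Y) (hu : Orthonormal ℝ u)
    (lam : ℕ → ℝ) (hpos : ∀ i, 0 < lam i) (hanti : StrictAnti lam)
    (hSv : ∀ i, S (v i) = lam i • u i)
    (hSadj : ∀ i, (ContinuousLinearMap.adjoint S) (u i) = lam i • v i)
    (n : ℕ) (hn : 1 ≤ n)
    (Nop : Y → X) (f : X) (usol : Y) (husol : usol = S (f - Nop usol))
    (E : ℝ → ℝ) (hE : MonotoneOn E (Set.Ici 0))
    (hstab : ∀ w : X, ‖S w - usol‖ ≤ E ‖w + Nop (S w) - f‖)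
    (C : ℝ) (hLip : ∀ y₁ y₂ : Y, ‖Nop y₁ - Nop y₂‖ ≤ C * ‖y₁ - y₂‖)
    (chat : Fin n → ℝ)
    (hmin : ∀ c : Fin n → ℝ,
      ‖(∑ i : Fin n, chat i • v (i : ℕ)) -
          (f - Nop (∑ i : Fin n, (lam (i : ℕ) * chat i) • u (i : ℕ)))‖ ≤
        ‖(∑ i : Fin n, c i • v (i : ℕ)) -
          (f - Nop (∑ i : Fin n, (lam (i : ℕ) * c i) • u (i : ℕ)))‖) :
    ‖usol - ∑ i : Fin n, (lam (i : ℕ) * chat i) • u (i : ℕ)‖ ≤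
      E ((1 + C * lam n) *
        ‖(f - Nop usol) - ∑ i ∈ Finset.range n, ⟪f - Nop usol, v i⟫ • v i‖) := by
  classical
  -- `C` is nonnegative
  have hC : 0 ≤ C := by
    have h1 : ‖u 0‖ = 1 := hu.1 0
    have := hLip (u 0) 0
    rw [sub_zero, h1, mul_one] at this
    exact le_trans (norm_nonneg _) this
  set g : X := f - Nop usol with hg
  have husolg : usol = S g := by rw [hg, ← husol]
  set h : X := g - ∑ i ∈ Finset.range n, ⟪g, v i⟫ • v i with hh
  have hhnn : (0 : ℝ) ≤ (1 + C * lam n) * ‖h‖ :=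
    mul_nonneg (add_nonneg zero_le_one (mul_nonneg hC (hpos n).le)) (norm_nonneg _)
  -- coefficients of `h` vanish below `n`
  have hcoef : ∀ i, i < n → ⟪v i, h⟫ = 0 := by
    intro i hi
    have hv := orthonormal_iff_ite.mp v.orthonormal
    rw [hh, inner_sub_right, inner_sum]
    have hite : ∀ j ∈ Finset.range n, ⟪v i, ⟪g, v j⟫ • v j⟫ =
        if i = j then ⟪g, v i⟫ else 0 := by
      intro j _
      rw [real_inner_smul_right, hv i j]
      by_cases hij : i = j <;> simp [hij]
    rw [Finset.sum_congr rfl hite, Finset.sum_ite_eq (Finset.range n) i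
      (fun _ => ⟪g, v i⟫)]
    simp [Finset.mem_range.2 hi, real_inner_comm]
  -- spectral bound on the tail: `‖S x‖ ≤ lam n * ‖x‖` on the closed span of `v i, i ≥ n`
  have hspan : (Submodule.span ℝ (v '' {i | n ≤ i}) : Set X) ⊆
      {x : X | ‖S x‖ ≤ lam n * ‖x‖} := by
    intro x hx
    rw [SetLike.mem_coe, Finsupp.mem_span_image_iff_linearCombination] at hx
    obtain ⟨l, hl, rfl⟩ := hx
    rw [Finsupp.mem_supported] at hl
    have hx : Finsupp.linearCombination ℝ (⇑v) l = ∑ i ∈ l.support, l i • v i := by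
      rw [Finsupp.linearCombination_apply]; rfl
    rw [Set.mem_setOf_eq, hx]
    have hSx : S (∑ i ∈ l.support, l i • v i) =
        ∑ i ∈ l.support, (lam i * l i) • u i := by
      rw [map_sum]
      refine Finset.sum_congr rfl fun i _ => ?_
      rw [map_smul, hSv i, smul_smul, mul_comm]
    rw [hSx]
    have hnormS : ‖∑ i ∈ l.support, (lam i * l i) • u i‖ ^ 2 =
        ∑ i ∈ l.support, (lam i * l i) ^ 2 := by
      rw [← real_inner_self_eq_norm_sq, hu.inner_sum]
      simp [sq]
    have hnormx : ‖∑ i ∈ l.support, l i • v i‖ ^ 2 =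
        ∑ i ∈ l.support, (l i) ^ 2 := by
      rw [← real_inner_self_eq_norm_sq, (v.orthonormal).inner_sum]
      simp [sq]
    have hsq : ‖∑ i ∈ l.support, (lam i * l i) • u i‖ ^ 2 ≤
        (lam n * ‖∑ i ∈ l.support, l i • v i‖) ^ 2 := by
      rw [hnormS, mul_pow, hnormx, Finset.mul_sum]
      refine Finset.sum_le_sum fun i hi => ?_
      have hni : n ≤ i := hl hi
      have : lam i ≤ lam n := hanti.antitone hni
      rw [mul_pow]
      exact mul_le_mul_of_nonneg_right
        (pow_le_pow_left₀ (hpos i).le this 2) (sq_nonneg _)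
    exact le_of_pow_le_pow_left₀ two_ne_zero
      (mul_nonneg (hpos n).le (norm_nonneg _)) hsq
  have hclosed : IsClosed {x : X | ‖S x‖ ≤ lam n * ‖x‖} :=
    isClosed_le (S.continuous.norm) (continuous_const.mul continuous_norm)
  have hmemcl : h ∈ closure (Submodule.span ℝ (v '' {i | n ≤ i}) : Set X) := by
    refine mem_closure_of_tendsto (v.hasSum_repr h) ?_
    filter_upwards with s
    refine Submodule.sum_mem _ fun i _ => ?_
    rcases lt_or_ge i n with hi | hi
    · have : v.repr h i = 0 := by
        rw [v.repr_apply_apply, hcoef i hi]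
      simp [this]
    · exact Submodule.smul_mem _ _ (Submodule.subset_span ⟨i, hi, rfl⟩)
  have hspec : ‖S h‖ ≤ lam n * ‖h‖ :=
    (closure_minimal hspan hclosed) hmemcl
  -- the comparison coefficients
  set Pg : X := ∑ i ∈ Finset.range n, ⟪g, v i⟫ • v i with hPg
  have hsum1 : (∑ i : Fin n, (fun j => ⟪g, v j⟫) (i : ℕ) • v (i : ℕ)) = Pg := by
    rw [hPg]
    exact Fin.sum_univ_eq_sum_range (fun i => ⟪g, v i⟫ • v i) n
  have hSsum : ∀ c : Fin n → ℝ, S (∑ i : Fin n, c i • v (i : ℕ)) =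
      ∑ i : Fin n, (lam (i : ℕ) * c i) • u (i : ℕ) := by
    intro c
    rw [map_sum]
    refine Finset.sum_congr rfl fun i _ => ?_
    rw [map_smul, hSv i, smul_smul, mul_comm]
  -- value of the objective at the comparison point
  have hobj : ‖(∑ i : Fin n, (fun j => ⟪g, v j⟫) (i : ℕ) • v (i : ℕ)) -
      (f - Nop (∑ i : Fin n, (lam (i : ℕ) * (fun j => ⟪g, v j⟫) i) • u (i : ℕ)))‖ ≤
      (1 + C * lam n) * ‖h‖ := by
    rw [← hSsum, hsum1]
    have hf : f = g + Nop (S g) := by rw [← husolg, hg]; abel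
    have hrw : Pg - (f - Nop (S Pg)) = -h + (Nop (S Pg) - Nop (S g)) := by
      rw [hf, hh, hPg]; abel
    rw [hrw]
    calc ‖-h + (Nop (S Pg) - Nop (S g))‖
        ≤ ‖-h‖ + ‖Nop (S Pg) - Nop (S g)‖ := norm_add_le _ _
      _ ≤ ‖h‖ + C * ‖S Pg - S g‖ := by
          rw [norm_neg]; exact add_le_add_right (hLip _ _) _
      _ = ‖h‖ + C * ‖S h‖ := by
          rw [← map_sub, ← norm_neg (S (Pg - g)), ← map_neg]
          congr 3
          rw [hh, hPg]; abel
      _ ≤ ‖h‖ + C * (lam n * ‖h‖) := by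
          exact add_le_add_right (mul_le_mul_of_nonneg_left hspec hC) _
      _ = (1 + C * lam n) * ‖h‖ := by ring
  -- stability estimate at the computed minimizer
  have hkey := hstab (∑ i : Fin n, chat i • v (i : ℕ))
  rw [hSsum chat] at hkey
  rw [norm_sub_rev] at hkey
  refine le_trans hkey ?_
  have harg : (∑ i : Fin n, chat i • v (i : ℕ)) +
      Nop (∑ i : Fin n, (lam (i : ℕ) * chat i) • u (i : ℕ)) - f =
      (∑ i : Fin n, chat i • v (i : ℕ)) -
      (f - Nop (∑ i : Fin n, (lam (i : ℕ) * chat i) • u (i : ℕ))) := by abel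
  rw [harg]
  exact hE (Set.mem_Ici.2 (norm_nonneg _)) (Set.mem_Ici.2 hhnn)
    (le_trans (hmin (fun i => ⟪g, v (i : ℕ)⟫)) hobj)
end

section
/- Let ĉ ∈ ℝⁿ be a minimizer of the map c ↦ ‖Σ_{i=1}^n c_i v̂_i − P_n(f − 𝒩(Σ_{i=1}^n λ_i c_i û_i))‖_X over ℝⁿ, and set u_n = Σ_{i=1}^n λ_i ĉ_i û_i. Then, with ℰ_n^{(1)} = ‖P_n^⊥(f − 𝒩(u))‖_X and ℰ_n^{(2)} = ‖P_n^⊥(f − 𝒩(u_n))‖_X, one has ‖u − u_n‖_Y ≤ λ_{n+1} ℰ_n^{(2)} + E(C λ_{n+1} (ℰ_n^{(1)} + ℰ_n^{(2)})). -/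
open RealInnerProductSpace

set_option linter.unusedSectionVars false

section Aux
variable {X Y : Type*} [NormedAddCommGroup X] [InnerProductSpace ℝ X] [CompleteSpace X]
    [NormedAddCommGroup Y] [InnerProductSpace ℝ Y] [CompleteSpace Y]

/-- Spectral bound: `S` contracts by `lam n` on vectors orthogonal to the first `n`
basis vectors. -/
lemma aux_spec (S : X →L[ℝ] Y) (v : HilbertBasis ℕ ℝ X) (u : ℕ → Y) (hu : Orthonormal ℝ u)
    (lam : ℕ → ℝ) (hpos : ∀ i, 0 < lam i) (hanti : StrictAnti lam)
    (hSv : ∀ i, S (v i) = lam i • u i) (n : ℕ) (q : X)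
    (hq : ∀ i < n, ⟪q, v i⟫ = 0) : ‖S q‖ ≤ lam n * ‖q‖ := by
  set a : ℕ → ℝ := fun i => ⟪(v i : X), q⟫ with ha
  have h1 : HasSum (fun i => a i • (v i : X)) q := by
    simpa [ha, HilbertBasis.repr_apply_apply] using v.hasSum_repr q
  have h3 : HasSum (fun i => (a i * lam i) • u i) (S q) := by
    have h := h1.mapL S
    simpa [map_smul, hSv, smul_smul] using h
  have hco : ∀ j, ⟪u j, S q⟫ = a j * lam j := by
    intro j
    have h := h3.mapL (innerSL ℝ (u j))
    have h' : (fun i => (innerSL ℝ (u j)) ((a i * lam i) • u i))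
        = fun i => if i = j then a j * lam j else 0 := by
      funext i
      rw [innerSL_apply_apply, real_inner_smul_right, orthonormal_iff_ite.mp hu]
      by_cases hij : i = j
      · subst hij; simp
      · simp [hij, Ne.symm hij]
    rw [h'] at h
    simpa using h.unique (hasSum_ite_eq j (a j * lam j))
  have h4 : HasSum (fun i => (a i * lam i) ^ 2) (‖S q‖ ^ 2) := by
    have h := h3.mapL (innerSL ℝ (S q))
    have h' : (fun i => (innerSL ℝ (S q)) ((a i * lam i) • u i))
        = fun i => (a i * lam i) ^ 2 := by
      funext i
      rw [innerSL_apply_apply, real_inner_smul_right, real_inner_comm, hco i]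
      ring
    rw [h'] at h
    simpa [real_inner_self_eq_norm_sq] using h
  have h5 : HasSum (fun i => (a i) ^ 2) (‖q‖ ^ 2) := by
    have h := v.hasSum_inner_mul_inner q q
    have h' : (fun i => ⟪q, (v i : X)⟫ * ⟪(v i : X), q⟫) = fun i => (a i) ^ 2 := by
      funext i
      rw [ha, real_inner_comm]
      ring
    rw [h'] at h
    simpa [real_inner_self_eq_norm_sq] using h
  have hterm : ∀ i, (a i * lam i) ^ 2 ≤ (lam n) ^ 2 * (a i) ^ 2 := by
    intro i
    rcases lt_or_ge i n with h | h
    · have h0 : ⟪(v i : X), q⟫ = 0 := by rw [real_inner_comm]; exact hq i h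
      have : a i = 0 := h0
      simp [this]
    · have h1 := hanti.antitone h
      nlinarith [hpos i, sq_nonneg (a i), mul_self_le_mul_self (hpos i).le h1]
  have key : ‖S q‖ ^ 2 ≤ (lam n) ^ 2 * ‖q‖ ^ 2 := hasSum_le hterm h4 (h5.mul_left _)
  nlinarith [norm_nonneg (S q), norm_nonneg q, (hpos n).le,
    mul_nonneg (hpos n).le (norm_nonneg q)]

/-- The residual after projecting on the first `n` basis vectors is orthogonal to them. -/
lemma aux_orth (v : HilbertBasis ℕ ℝ X) (x : X) (n : ℕ) :
    ∀ j < n, ⟪x - ∑ i ∈ Finset.range n, ⟪x, (v i : X)⟫ • (v i : X), (v j : X)⟫ = 0 := by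
  intro j hj
  rw [inner_sub_left,
    Orthonormal.inner_left_sum v.orthonormal (fun i => ⟪x, (v i : X)⟫)
      (Finset.mem_range.mpr hj)]
  simp

/-- The projection on the first `n` basis vectors is a contraction. -/
lemma aux_proj_le (v : HilbertBasis ℕ ℝ X) (x : X) (n : ℕ) :
    ‖∑ i ∈ Finset.range n, ⟪x, (v i : X)⟫ • (v i : X)‖ ≤ ‖x‖ := by
  have h1 : ‖∑ i ∈ Finset.range n, ⟪x, (v i : X)⟫ • (v i : X)‖ ^ 2
      = ∑ i ∈ Finset.range n, ⟪x, (v i : X)⟫ ^ 2 := by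
    rw [← real_inner_self_eq_norm_sq,
      Orthonormal.inner_sum v.orthonormal _ _ (Finset.range n)]
    simp [sq]
  have h2 : ∑ i ∈ Finset.range n, ⟪x, (v i : X)⟫ ^ 2 ≤ ‖x‖ ^ 2 := by
    have h := Orthonormal.sum_inner_products_le (𝕜 := ℝ) x v.orthonormal (s := Finset.range n)
    refine le_trans (le_of_eq ?_) h
    refine Finset.sum_congr rfl fun i _ => ?_
    rw [real_inner_comm, Real.norm_eq_abs, sq_abs]
  nlinarith [norm_nonneg x, norm_nonneg (∑ i ∈ Finset.range n, ⟪x, (v i : X)⟫ • (v i : X))]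

end Aux

set_option maxHeartbeats 1000000 in

/-- Let `ĉ ∈ ℝⁿ` minimize
`c ↦ ‖Σ_{i=1}^n c_i v̂_i − P_n(f − 𝒩(Σ_{i=1}^n λ_i c_i û_i))‖` over `ℝⁿ`, and set
`u_n = Σ_{i=1}^n λ_i ĉ_i û_i`. Then, with `ℰ_n^{(1)} = ‖P_n^⊥(f − 𝒩(u))‖` and
`ℰ_n^{(2)} = ‖P_n^⊥(f − 𝒩(u_n))‖`, one has
`‖u − u_n‖ ≤ λ_{n+1} ℰ_n^{(2)} + E(C λ_{n+1} (ℰ_n^{(1)} + ℰ_n^{(2)}))`, where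
`P_n g = Σ_{i=1}^n ⟨g, v̂_i⟩ v̂_i`, `P_n^⊥ g = g − P_n g`, `E` is the stability modulus and
`C` the Lipschitz constant of `𝒩`.
(Indices shifted: `i = 1, 2, …` corresponds to `0, 1, …`, so `λ_{n+1}` is `lam n`.) -/
theorem semilinear_second_choice_bound
    {X Y : Type*} [NormedAddCommGroup X] [InnerProductSpace ℝ X] [CompleteSpace X]
    [NormedAddCommGroup Y] [InnerProductSpace ℝ Y] [CompleteSpace Y]
    (S : X →L[ℝ] Y) (hS : Function.Injective S)
    (v : HilbertBasis ℕ ℝ X) (u : ℕ → Y) (hu : Orthonormal ℝ u)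
    (lam : ℕ → ℝ) (hpos : ∀ i, 0 < lam i) (hanti : StrictAnti lam)
    (hSv : ∀ i, S (v i) = lam i • u i)
    (hSadj : ∀ i, (ContinuousLinearMap.adjoint S) (u i) = lam i • v i)
    (n : ℕ) (hn : 1 ≤ n)
    (Nop : Y → X) (f : X) (usol : Y) (husol : usol = S (f - Nop usol))
    (E : ℝ → ℝ) (hE : MonotoneOn E (Set.Ici 0))
    (hstab : ∀ w : X, ‖S w - usol‖ ≤ E ‖w + Nop (S w) - f‖)
    (C : ℝ) (hLip : ∀ y₁ y₂ : Y, ‖Nop y₁ - Nop y₂‖ ≤ C * ‖y₁ - y₂‖)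
    (chat : Fin n → ℝ)
    (hmin : ∀ c : Fin n → ℝ,
      ‖(∑ i : Fin n, chat i • v (i : ℕ)) -
          ∑ i ∈ Finset.range n,
            ⟪f - Nop (∑ j : Fin n, (lam (j : ℕ) * chat j) • u (j : ℕ)), v i⟫ • v i‖ ≤
        ‖(∑ i : Fin n, c i • v (i : ℕ)) -
          ∑ i ∈ Finset.range n,
            ⟪f - Nop (∑ j : Fin n, (lam (j : ℕ) * c j) • u (j : ℕ)), v i⟫ • v i‖) :
    ‖usol - ∑ i : Fin n, (lam (i : ℕ) * chat i) • u (i : ℕ)‖ ≤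
      lam n *
          ‖(f - Nop (∑ i : Fin n, (lam (i : ℕ) * chat i) • u (i : ℕ))) -
            ∑ i ∈ Finset.range n,
              ⟪f - Nop (∑ j : Fin n, (lam (j : ℕ) * chat j) • u (j : ℕ)), v i⟫ • v i‖ +
        E (C * lam n *
          (‖(f - Nop usol) - ∑ i ∈ Finset.range n, ⟪f - Nop usol, v i⟫ • v i‖ +
            ‖(f - Nop (∑ i : Fin n, (lam (i : ℕ) * chat i) • u (i : ℕ))) -
              ∑ i ∈ Finset.range n,
                ⟪f - Nop (∑ j : Fin n, (lam (j : ℕ) * chat j) • u (j : ℕ)), v i⟫ • v i‖)) := by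
  have hScomb : ∀ c : Fin n → ℝ,
      S (∑ i : Fin n, c i • (v (i : ℕ) : X)) = ∑ i : Fin n, (lam (i : ℕ) * c i) • u (i : ℕ) := by
    intro c
    rw [map_sum]
    refine Finset.sum_congr rfl fun i _ => ?_
    rw [map_smul, hSv, smul_smul, mul_comm]
  have hC : 0 ≤ C := by
    have hv0 : (v 0 : X) ≠ 0 := v.orthonormal.ne_zero 0
    have h0 : S (v 0) ≠ 0 := fun h => hv0 (hS (by rw [h, map_zero]))
    have hlip := hLip (S (v 0)) 0
    have hposn : 0 < ‖S (v 0) - 0‖ := by simpa [sub_zero, norm_pos_iff] using h0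
    nlinarith [norm_nonneg (Nop (S (v 0)) - Nop 0)]
  set un := ∑ i : Fin n, (lam (i : ℕ) * chat i) • u (i : ℕ) with hun
  set wn := ∑ i : Fin n, chat i • (v (i : ℕ) : X) with hwn
  set g1 := f - Nop usol with hg1
  set g2 := f - Nop un with hg2
  set Pg1 := ∑ i ∈ Finset.range n, ⟪g1, (v i : X)⟫ • (v i : X) with hPg1
  set Pg2 := ∑ i ∈ Finset.range n, ⟪g2, (v i : X)⟫ • (v i : X) with hPg2
  have hSwn : S wn = un := hScomb chat
  -- Step 1: the minimal value is bounded by `C * lam n * E1`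
  have hJ : ‖wn - Pg2‖ ≤ C * (lam n * ‖g1 - Pg1‖) := by
    set cstar : Fin n → ℝ := fun i => ⟪g1, (v (i : ℕ) : X)⟫ with hcstar
    have hp : (∑ i : Fin n, cstar i • (v (i : ℕ) : X)) = Pg1 := by
      rw [hPg1, Finset.sum_range]
    have hSP : (∑ j : Fin n, (lam (j : ℕ) * cstar j) • u (j : ℕ)) = S Pg1 := by
      rw [← hScomb cstar, hp]
    have h1 := hmin cstar
    rw [hp, hSP] at h1
    have hdiff : Pg1 - ∑ i ∈ Finset.range n, ⟪f - Nop (S Pg1), (v i : X)⟫ • (v i : X)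
        = ∑ i ∈ Finset.range n, ⟪Nop (S Pg1) - Nop usol, (v i : X)⟫ • (v i : X) := by
      rw [hPg1, ← Finset.sum_sub_distrib]
      refine Finset.sum_congr rfl fun i _ => ?_
      rw [← sub_smul, ← inner_sub_left]
      have he2 : g1 - (f - Nop (S Pg1)) = Nop (S Pg1) - Nop usol := by rw [hg1]; abel
      rw [he2]
    have hSP1 : ‖S Pg1 - usol‖ ≤ lam n * ‖g1 - Pg1‖ := by
      have he : S Pg1 - usol = -(S (g1 - Pg1)) := by
        rw [map_sub, husol]; abel
      rw [he, norm_neg]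
      exact aux_spec S v u hu lam hpos hanti hSv n _ (aux_orth v g1 n)
    calc ‖wn - Pg2‖ ≤ ‖Pg1 - ∑ i ∈ Finset.range n,
          ⟪f - Nop (S Pg1), (v i : X)⟫ • (v i : X)‖ := h1
      _ = ‖∑ i ∈ Finset.range n, ⟪Nop (S Pg1) - Nop usol, (v i : X)⟫ • (v i : X)‖ := by
          rw [hdiff]
      _ ≤ ‖Nop (S Pg1) - Nop usol‖ := aux_proj_le v _ n
      _ ≤ C * ‖S Pg1 - usol‖ := hLip _ _
      _ ≤ C * (lam n * ‖g1 - Pg1‖) := mul_le_mul_of_nonneg_left hSP1 hC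
  -- Step 2
  set z := wn + (g2 - Pg2) with hz
  have hSz2 : ‖S z - un‖ ≤ lam n * ‖g2 - Pg2‖ := by
    have he : S z - un = S (g2 - Pg2) := by rw [hz, map_add, hSwn]; abel
    rw [he]
    exact aux_spec S v u hu lam hpos hanti hSv n _ (aux_orth v g2 n)
  have harg : z + Nop (S z) - f = (wn - Pg2) + (Nop (S z) - Nop un) := by
    rw [hz, hg2]; abel
  have hargle : ‖z + Nop (S z) - f‖ ≤ C * lam n * (‖g1 - Pg1‖ + ‖g2 - Pg2‖) := by
    rw [harg]
    calc ‖(wn - Pg2) + (Nop (S z) - Nop un)‖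
        ≤ ‖wn - Pg2‖ + ‖Nop (S z) - Nop un‖ := norm_add_le _ _
      _ ≤ C * (lam n * ‖g1 - Pg1‖) + C * ‖S z - un‖ := add_le_add hJ (hLip _ _)
      _ ≤ C * (lam n * ‖g1 - Pg1‖) + C * (lam n * ‖g2 - Pg2‖) :=
          add_le_add_right (mul_le_mul_of_nonneg_left hSz2 hC) _
      _ = C * lam n * (‖g1 - Pg1‖ + ‖g2 - Pg2‖) := by ring
  have hrhs0 : (0 : ℝ) ≤ C * lam n * (‖g1 - Pg1‖ + ‖g2 - Pg2‖) :=
    mul_nonneg (mul_nonneg hC (hpos n).le) (add_nonneg (norm_nonneg _) (norm_nonneg _))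
  have hEle : E ‖z + Nop (S z) - f‖ ≤ E (C * lam n * (‖g1 - Pg1‖ + ‖g2 - Pg2‖)) :=
    hE (Set.mem_Ici.mpr (norm_nonneg _)) (Set.mem_Ici.mpr hrhs0) hargle
  calc ‖usol - un‖ ≤ ‖S z - un‖ + ‖S z - usol‖ := by
        have he : usol - un = (S z - un) - (S z - usol) := by abel
        rw [he]; exact norm_sub_le _ _
    _ ≤ lam n * ‖g2 - Pg2‖ + E (C * lam n * (‖g1 - Pg1‖ + ‖g2 - Pg2‖)) :=
        add_le_add hSz2 (le_trans (hstab z) hEle)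
end
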